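/- Let m, d be natural numbers, E > 0, cᵢ > 0 and xᵢ > 0 for i = 1, …, m, bᵢ ∈ ℝ^d, p ∈ ℝ^d, and set K = Σ_{i=1}^m (E/cᵢ) xᵢ bᵢ bᵢᵀ. Then for every u ∈ ℝ^d and every q ∈ ℝ^m satisfying Σ_{i=1}^m qᵢ bᵢ = p, one has 2⟨p, u⟩ − ⟨u, K u⟩ ≤ Σ_{i=1}^m (cᵢ/(E xᵢ)) qᵢ². -/

import Mathlib

/-!
Each member contributes separately to both sides: with `tᵢ = ⟨bᵢ, u⟩` the left side is
`∑ (2 qᵢ tᵢ - αᵢ tᵢ²)` for the member stiffnesses `αᵢ = E xᵢ / cᵢ > 0`, and each summand is at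
most `qᵢ² / αᵢ` since the difference is `(qᵢ - αᵢ tᵢ)² / αᵢ ≥ 0`.
-/

open Matrix

theorem two_mul_mul_sub_mul_sq_le_inv_mul_sq {𝕜 : Type*} [Field 𝕜] [LinearOrder 𝕜]
    [IsStrictOrderedRing 𝕜] {a : 𝕜} (ha : 0 < a) (q t : 𝕜) :
    2 * (q * t) - a * t ^ 2 ≤ a⁻¹ * q ^ 2 := by
  have hsq : 0 ≤ a⁻¹ * (q - a * t) ^ 2 := by positivity
  have hexpand : a⁻¹ * (q - a * t) ^ 2 = a⁻¹ * q ^ 2 - (2 * (q * t) - a * t ^ 2) := by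
    field_simp
    ring
  linarith

section

variable {ι n R : Type*} [Fintype ι] [Fintype n] [CommSemiring R]

theorem sum_smul_dotProduct (q : ι → R) (b : ι → n → R) (u : n → R) :
    (∑ i, q i • b i) ⬝ᵥ u = ∑ i, q i * (b i ⬝ᵥ u) := by
  simp only [sum_dotProduct, smul_dotProduct, smul_eq_mul]

theorem dotProduct_sum_smul_vecMulVec_self_mulVec (w : ι → R) (b : ι → n → R) (u : n → R) :
    u ⬝ᵥ (∑ i, w i • vecMulVec (b i) (b i)) *ᵥ u = ∑ i, w i * (b i ⬝ᵥ u) ^ 2 := by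
  simp only [sum_mulVec, dotProduct_sum, smul_mulVec, vecMulVec_mulVec, dotProduct_smul,
    op_smul_eq_smul, smul_eq_mul, dotProduct_comm u (b _)]
  refine Finset.sum_congr rfl fun i _ => ?_
  ring

end

/-- Weak duality: for any displacement `u` and any force vector `q` in
equilibrium with the load `p`, the compliance objective is bounded by the
complementary energy. -/
theorem compliance_weak_duality (m d : ℕ)
    (E : ℝ) (hE : 0 < E) (c x : Fin m → ℝ)
    (hc : ∀ i, 0 < c i) (hx : ∀ i, 0 < x i)
    (b : Fin m → Fin d → ℝ) (p : Fin d → ℝ)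
    (K : Matrix (Fin d) (Fin d) ℝ)
    (hK : K = ∑ i, (E / c i * x i) • Matrix.vecMulVec (b i) (b i))
    (u : Fin d → ℝ) (q : Fin m → ℝ) (hq : (∑ i, q i • b i) = p) :
    2 * (p ⬝ᵥ u) - u ⬝ᵥ K.mulVec u ≤ ∑ i, c i / (E * x i) * q i ^ 2 := by
  rw [← hq, hK, sum_smul_dotProduct, dotProduct_sum_smul_vecMulVec_self_mulVec, Finset.mul_sum,
    ← Finset.sum_sub_distrib]
  refine Finset.sum_le_sum fun i _ => ?_
  have hstiff : 0 < E / c i * x i := by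
    have := hc i
    have := hx i
    positivity
  have hflex : c i / (E * x i) = (E / c i * x i)⁻¹ := by
    rw [div_mul_eq_mul_div, inv_div]
  rw [hflex]
  exact two_mul_mul_sub_mul_sq_le_inv_mul_sq hstiff _ _
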